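/- Relative Ancona inequality from the ε-avoidance estimate: let Γ be a countable group with a transient random walk with Green function G. Suppose g, h, p ∈ Γ and R ≥ 0 satisfy G(g,h; B_R(p)ᶜ) ≤ (1/2)·G(g,h), and suppose there is a constant C such that G(g,q) ≤ C·G(g,p) and G(q,h) ≤ C·G(p,h) for all q in the ball B_R(p). Then G(g,h) ≤ 2C²·|B_R(p)|·G(g,p)·G(p,h). -/

import Mathlib

open scoped ENNReal

/-- The weight of a trajectory of the random walk driven by `μ`. -/
noncomputable def pathWeight {G : Type*} [Group G] (μ : G → ℝ≥0∞) : List G → ℝ≥0∞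
  | [] => 1
  | [_] => 1
  | a :: b :: l => μ (a⁻¹ * b) * pathWeight μ (b :: l)

/-- A trajectory starting at `g` and ending at `h`. -/
def IsPathFromTo {G : Type*} (g h : G) (l : List G) : Prop :=
  l.head? = some g ∧ l.getLast? = some h

/-- A trajectory from `g` to `h` all of whose intermediate points (excluding the
endpoints) lie in `A`. -/
def IsPathFromToIn {G : Type*} (A : Set G) (g h : G) (l : List G) : Prop :=
  IsPathFromTo g h l ∧ ∀ i : ℕ, 0 < i → i + 1 < l.length → ∀ x : G, l[i]? = some x → x ∈ A

/-- The Green function: total weight of all trajectories from `g` to `h`. -/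
noncomputable def green {G : Type*} [Group G] (μ : G → ℝ≥0∞) (g h : G) : ℝ≥0∞ :=
  ∑' l : {l : List G // IsPathFromTo g h l}, pathWeight μ l.1

/-- The restricted Green function `G(g,h;A)`: the contribution to `G(g,h)` of the
trajectories all of whose intermediate points lie in `A`. -/
noncomputable def greenRes {G : Type*} [Group G] (μ : G → ℝ≥0∞) (A : Set G) (g h : G) :
    ℝ≥0∞ :=
  ∑' l : {l : List G // IsPathFromToIn A g h l}, pathWeight μ l.1

/-- The word distance on `G` with respect to a generating set `S`. -/
noncomputable def wordDist {G : Type*} [Group G] (S : Set G) (g h : G) : ℕ :=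
  sInf {n | ∃ l : List G, (∀ s ∈ l, s ∈ S) ∧ l.length = n ∧ l.prod = g⁻¹ * h}

/-!
Split the trajectories from `g` to `h` according to whether they meet the ball `B = B_R(p)`
at an intermediate time. Those avoiding `B` contribute `G(g,h; Bᶜ) ≤ G(g,h)/2`. Cutting a
trajectory at a visit to `q ∈ B` is injective and multiplicative on weights, so the others
contribute at most `∑_{q ∈ B} G(g,q) G(q,h) ≤ C² |B| G(g,p) G(p,h)` by the Harnack bounds.
Since `G(g,h) < ∞`, the half can be absorbed into the left-hand side.
-/

namespace IsPathFromTo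

variable {G : Type*} {g h x : G} {l : List G} {n : ℕ}

lemma take_succ (hl : IsPathFromTo g h l) (hx : l[n]? = some x) :
    IsPathFromTo g x (l.take (n + 1)) :=
  ⟨by simpa [List.head?_take] using hl.1, by simp [List.getLast?_take, hx]⟩

lemma drop (hl : IsPathFromTo g h l) (hx : l[n]? = some x) :
    IsPathFromTo x h (l.drop n) := by
  obtain ⟨hn, -⟩ := List.getElem?_eq_some_iff.mp hx
  refine ⟨?_, ?_⟩
  · rw [List.head?_drop, hx]
  · rw [List.getLast?_drop, if_neg (by omega), hl.2]

end IsPathFromTo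

section

variable {G : Type*} [Group G] (μ : G → ℝ≥0∞)

lemma pathWeight_append_cons (q : G) (b a : List G) :
    pathWeight μ (a ++ q :: b) = pathWeight μ (a ++ [q]) * pathWeight μ (q :: b) := by
  induction a with
  | nil => simp [pathWeight]
  | cons x a ih =>
    cases a with
    | nil => cases b <;> simp [pathWeight]
    | cons y a =>
      simp only [List.cons_append, pathWeight] at ih ⊢
      rw [ih, mul_assoc]

lemma pathWeight_eq_take_mul_drop {l : List G} {n : ℕ} {x : G} (hx : l[n]? = some x) :
    pathWeight μ l = pathWeight μ (l.take (n + 1)) * pathWeight μ (l.drop n) := by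
  obtain ⟨hn, hget⟩ := List.getElem?_eq_some_iff.mp hx
  have hdrop : l.drop n = x :: l.drop (n + 1) := by rw [List.drop_eq_getElem_cons hn, hget]
  have htake : l.take (n + 1) = l.take n ++ [x] := by rw [List.take_add_one, hx]; rfl
  conv_lhs => rw [← List.take_append_drop n l, hdrop]
  rw [pathWeight_append_cons, ← htake, hdrop]

lemma green_mul_green (g q h : G) :
    green μ g q * green μ q h =
      ∑' c : {l // IsPathFromTo g q l} × {l // IsPathFromTo q h l},
        pathWeight μ c.1.1 * pathWeight μ c.2.1 := by
  rw [ENNReal.tsum_prod', green, green, ← ENNReal.tsum_mul_right]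
  simp only [← ENNReal.tsum_mul_left]

lemma tsum_pathWeight_le_sum_green_mul_green {g h : G} (s : Finset G)
    (P : Set {l : List G // IsPathFromTo g h l})
    (hP : ∀ l ∈ P, ∃ (n : ℕ) (x : G), l.1[n]? = some x ∧ x ∈ s) :
    ∑' l : P, pathWeight μ l.1.1 ≤ ∑ q ∈ s, green μ g q * green μ q h := by
  choose n x hx hxs using fun l : P => hP l.1 l.2
  let cut : P → Σ q : s, {l // IsPathFromTo g (q : G) l} × {l // IsPathFromTo (q : G) h l} :=
    fun l => ⟨⟨x l, hxs l⟩, ⟨_, l.1.2.take_succ (hx l)⟩, ⟨_, l.1.2.drop (hx l)⟩⟩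
  have hcut : Function.Injective cut := by
    intro l l' hll'
    have key : ∀ l : P, l.1.1 = (cut l).2.1.1 ++ (cut l).2.2.1.tail := fun l => by
      simp [cut, List.tail_drop]
    exact Subtype.ext (Subtype.ext (by rw [key l, key l', hll']))
  calc ∑' l : P, pathWeight μ l.1.1
      = ∑' l : P, pathWeight μ (cut l).2.1.1 * pathWeight μ (cut l).2.2.1 :=
        tsum_congr fun l => pathWeight_eq_take_mul_drop μ (hx l)
    _ ≤ ∑' c : Σ q : s, {l // IsPathFromTo g (q : G) l} × {l // IsPathFromTo (q : G) h l},
          pathWeight μ c.2.1.1 * pathWeight μ c.2.2.1 :=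
        ENNReal.tsum_comp_le_tsum_of_injective hcut
          (fun c => pathWeight μ c.2.1.1 * pathWeight μ c.2.2.1)
    _ = ∑ q ∈ s, green μ g q * green μ q h := by
        rw [ENNReal.tsum_sigma', ← Finset.tsum_subtype]
        exact tsum_congr fun q => (green_mul_green μ g q h).symm

lemma green_le_greenRes_compl_add_sum (s : Finset G) (g h : G) :
    green μ g h ≤ greenRes μ (s : Set G)ᶜ g h + ∑ q ∈ s, green μ g q * green μ q h := by
  let avoid : Set {l : List G // IsPathFromTo g h l} :=
    {l | IsPathFromToIn (s : Set G)ᶜ g h l}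
  have havoid : ∑' l : avoid, pathWeight μ l.1.1 = greenRes μ (s : Set G)ᶜ g h :=
    (Equiv.subtypeSubtypeEquivSubtype (q := IsPathFromToIn (s : Set G)ᶜ g h) And.left).tsum_eq
      fun l => pathWeight μ l.1
  have hvisit : ∀ l ∈ avoidᶜ, ∃ (n : ℕ) (x : G), l.1[n]? = some x ∧ x ∈ s := by
    intro l hl
    simp only [avoid, IsPathFromToIn, Set.mem_compl_iff, Set.mem_ofPred_eq, l.2, true_and,
      not_forall, not_not, Finset.mem_coe] at hl
    obtain ⟨n, -, -, x, hx, hxs⟩ := hl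
    exact ⟨n, x, hx, hxs⟩
  calc green μ g h
      = ∑' l : avoid, pathWeight μ l.1.1 + ∑' l : ↥avoidᶜ, pathWeight μ l.1.1 :=
        (ENNReal.summable.tsum_add_tsum_compl ENNReal.summable).symm
    _ ≤ _ := by
        rw [havoid]
        gcongr
        exact tsum_pathWeight_le_sum_green_mul_green μ s _ hvisit

end

lemma ENNReal.le_two_mul_of_le_half_add {a b : ℝ≥0∞} (ha : a ≠ ⊤)
    (h : a ≤ 1 / 2 * a + b) : a ≤ 2 * b := by
  have hhalf_ne_top : a / 2 ≠ ⊤ := ENNReal.div_ne_top ha two_ne_zero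
  have hhalf : a / 2 ≤ b := by
    rw [one_div, ← ENNReal.div_eq_inv_mul] at h
    nth_rewrite 1 [← ENNReal.add_halves a] at h
    exact (ENNReal.add_le_add_iff_left hhalf_ne_top).mp h
  calc a = 2 * (a / 2) := (ENNReal.mul_div_cancel two_ne_zero ENNReal.ofNat_ne_top).symm
    _ ≤ 2 * b := by gcongr

theorem green_relative_ancona_general {G : Type*} [Group G]
    (S : Set G) (μ : G → ℝ≥0∞)
    (htrans : ∀ g h : G, green μ g h < ⊤)
    (g h p : G) (R : ℕ)
    (hfin : {q : G | wordDist S p q ≤ R}.Finite)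
    (havoid : greenRes μ ({q : G | wordDist S p q ≤ R})ᶜ g h ≤ (1 / 2) * green μ g h)
    (C : ℝ≥0∞)
    (hharnack : ∀ q : G, wordDist S p q ≤ R →
      green μ g q ≤ C * green μ g p ∧ green μ q h ≤ C * green μ p h) :
    green μ g h ≤ 2 * C ^ 2 * (hfin.toFinset.card : ℝ≥0∞) * (green μ g p * green μ p h) := by
  have hsum : ∑ q ∈ hfin.toFinset, green μ g q * green μ q h ≤
      hfin.toFinset.card • ((C * green μ g p) * (C * green μ p h)) :=
    Finset.sum_le_card_nsmul _ _ _ fun q hq =>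
      have hq := hharnack q (hfin.mem_toFinset.mp hq)
      mul_le_mul' hq.1 hq.2
  have hdecomp := green_le_greenRes_compl_add_sum μ hfin.toFinset g h
  rw [hfin.coe_toFinset] at hdecomp
  calc green μ g h ≤ 2 * (hfin.toFinset.card • ((C * green μ g p) * (C * green μ p h))) :=
        ENNReal.le_two_mul_of_le_half_add (htrans g h).ne
          (hdecomp.trans (add_le_add havoid hsum))
    _ = _ := by rw [nsmul_eq_mul]; ring

/-- Relative Ancona inequality from the ε-avoidance estimate: if the trajectories
avoiding the ball `B_R(p)` contribute at most half of `G(g,h)`, and the Green function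
is Harnack-comparable at scale `R` around `p` with constant `C`, then
`G(g,h) ≤ 2 C² |B_R(p)| G(g,p) G(p,h)`. -/
theorem green_relative_ancona {G : Type*} [Group G] [Countable G]
    (S : Set G) (μ : G → ℝ≥0∞) (hprob : ∑' g : G, μ g = 1)
    (htrans : ∀ g h : G, green μ g h < ⊤)
    (g h p : G) (R : ℕ)
    (hfin : {q : G | wordDist S p q ≤ R}.Finite)
    (havoid : greenRes μ ({q : G | wordDist S p q ≤ R})ᶜ g h ≤ (1 / 2) * green μ g h)
    (C : ℝ≥0∞)
    (hharnack : ∀ q : G, wordDist S p q ≤ R →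
      green μ g q ≤ C * green μ g p ∧ green μ q h ≤ C * green μ p h) :
    green μ g h ≤ 2 * C ^ 2 * (hfin.toFinset.card : ℝ≥0∞) * (green μ g p * green μ p h) :=
  green_relative_ancona_general S μ htrans g h p R hfin havoid C hharnack
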